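/- arXiv:2409.06256 — 3 statements merged into one kernel-verified Lean document; each statement's English description precedes it below -/
import Mathlib

section
/- Let f, η : ℝ^n → ℝ^n with η(z)ᵀ f(z) ≤ 0 for all z. Then the following are equivalent: (1) there exist j, r : range(η) → ℝ^n with vᵀ j(v) = 0 and vᵀ r(v) ≥ 0 on range(η) such that f(z) = j(η(z)) - r(η(z)) for all z; (2) for all z₁, z₂, η(z₁) = η(z₂) implies f(z₁) = f(z₂); (3) there exists m : range(η) → ℝ^n with f(z) = m(η(z)) for all z. -/
open Matrix

theorem stmt_4 {n : ℕ} (f η : (Fin n → ℝ) → (Fin n → ℝ))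
    (hpassive : ∀ z, η z ⬝ᵥ f z ≤ 0) :
    List.TFAE [
      (∃ j r : (Fin n → ℝ) → (Fin n → ℝ),
        (∀ z, f z = j (η z) - r (η z)) ∧
        (∀ v ∈ Set.range η, v ⬝ᵥ j v = 0) ∧
        (∀ v ∈ Set.range η, 0 ≤ v ⬝ᵥ r v)),
      (∀ z₁ z₂, η z₁ = η z₂ → f z₁ = f z₂),
      (∃ m : (Fin n → ℝ) → (Fin n → ℝ), ∀ z, f z = m (η z))] := by
  tfae_have 1 → 2 := by
    rintro ⟨j, r, hf, -, -⟩ z₁ z₂ h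
    rw [hf z₁, hf z₂, h]
  tfae_have 2 → 3 := by
    intro h2
    classical
    refine ⟨fun v => if h : v ∈ Set.range η then f h.choose else 0, fun z => ?_⟩
    have hz : η z ∈ Set.range η := ⟨z, rfl⟩
    simp only [dif_pos hz]
    exact h2 z hz.choose hz.choose_spec.symm
  tfae_have 3 → 1 := by
    rintro ⟨m, hm⟩
    classical
    refine ⟨fun v => m v + (-(v ⬝ᵥ m v) / (v ⬝ᵥ v)) • v,
            fun v => (-(v ⬝ᵥ m v) / (v ⬝ᵥ v)) • v, fun z => by rw [hm]; simp, ?_, ?_⟩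
    · rintro v ⟨z, rfl⟩
      rcases eq_or_ne (η z) 0 with h0 | h0
      · simp [h0]
      · have hne : η z ⬝ᵥ η z ≠ 0 := by
          simpa [dotProduct_self_eq_zero] using h0
        rw [dotProduct_add, dotProduct_smul, smul_eq_mul, div_mul_cancel₀ _ hne]
        ring
    · rintro v ⟨z, rfl⟩
      rcases eq_or_ne (η z) 0 with h0 | h0
      · simp [h0]
      · have hne : (0:ℝ) < η z ⬝ᵥ η z := by
          have hnn : (0:ℝ) ≤ η z ⬝ᵥ η z :=
            Finset.sum_nonneg fun i _ => mul_self_nonneg _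
          rcases hnn.lt_or_eq with h | h
          · exact h
          · exact absurd (dotProduct_self_eq_zero.mp h.symm) h0
        rw [dotProduct_smul, smul_eq_mul, div_mul_cancel₀ _ hne.ne']
        have := hpassive z
        rw [hm z] at this
        linarith
  tfae_finish
end

section
/- Let η : ℝ^n → ℝ^n and J, R : ℝ^n → ℝ^{n×n} with J(z) skew-symmetric and R(z) symmetric positive semidefinite for all z, and set f(z) = (J(z)-R(z))η(z). If whenever η(z₁) = η(z₂) we have η(z₁) ∈ ker(J(z₁) - J(z₂) - R(z₁) + R(z₂)), then there exist j, r : range(η) → ℝ^n with vᵀ j(v) = 0 and vᵀ r(v) ≥ 0 on range(η) such that f(z) = j(η(z)) - r(η(z)) for all z. -/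
open Matrix

theorem stmt_6 {n : ℕ} (η : (Fin n → ℝ) → (Fin n → ℝ))
    (J R : (Fin n → ℝ) → Matrix (Fin n) (Fin n) ℝ)
    (hJ : ∀ z, (J z)ᵀ = -(J z))
    (hRsym : ∀ z, (R z)ᵀ = R z)
    (hRpsd : ∀ z v, 0 ≤ v ⬝ᵥ (R z).mulVec v)
    (f : (Fin n → ℝ) → (Fin n → ℝ))
    (hf : ∀ z, f z = (J z - R z).mulVec (η z))
    (hker : ∀ z₁ z₂, η z₁ = η z₂ →
      (J z₁ - J z₂ - R z₁ + R z₂).mulVec (η z₁) = 0) :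
    ∃ j r : (Fin n → ℝ) → (Fin n → ℝ),
      (∀ z, f z = j (η z) - r (η z)) ∧
      (∀ v ∈ Set.range η, v ⬝ᵥ j v = 0) ∧
      (∀ v ∈ Set.range η, 0 ≤ v ⬝ᵥ r v) := by
  classical
  refine ⟨fun v => if h : v ∈ Set.range η then (J h.choose).mulVec v else 0,
    fun v => if h : v ∈ Set.range η then (R h.choose).mulVec v else 0, ?_, ?_, ?_⟩
  · intro z
    have h : η z ∈ Set.range η := ⟨z, rfl⟩
    simp only [dif_pos h]
    have hc : η h.choose = η z := h.choose_spec
    have hk := hker z h.choose hc.symm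
    have : (J z - R z).mulVec (η z) =
        (J h.choose).mulVec (η z) - (R h.choose).mulVec (η z) := by
      have h1 : (J z - J h.choose - R z + R h.choose).mulVec (η z) = 0 := hk
      have h2 : (J z).mulVec (η z) - (J h.choose).mulVec (η z)
          - (R z).mulVec (η z) + (R h.choose).mulVec (η z) = 0 := by
        rw [← sub_mulVec, ← sub_mulVec, ← add_mulVec]; exact h1
      rw [sub_mulVec]
      have := sub_eq_zero.mp (by linear_combination (norm := abel) h2 :
        ((J z).mulVec (η z) - (R z).mulVec (η z)) -
          ((J h.choose).mulVec (η z) - (R h.choose).mulVec (η z)) = 0)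
      exact this
    rw [hf z, this]
  · intro v hv
    simp only [dif_pos hv]
    have : v ⬝ᵥ (J hv.choose).mulVec v = -(v ⬝ᵥ (J hv.choose).mulVec v) := by
      conv_lhs => rw [dotProduct_mulVec, ← dotProduct_comm, ← mulVec_transpose,
        hJ, neg_mulVec, dotProduct_neg]
    linarith
  · intro v hv
    simp only [dif_pos hv]
    exact hRpsd _ v
end

section
/- Let f, η : ℝ^n → ℝ^n be continuously differentiable, with η a bijection whose Jacobian Dη(z) is invertible for all z, and suppose f(η⁻¹(0)) = 0 and Df(z) Dη(z)⁻¹ is negative semidefinite (as a quadratic form) for all z. Then there exist J, R : ℝ^n → ℝ^{n×n} with J(z) skew-symmetric, R(z) symmetric positive semidefinite, and f(z) = (J(z) - R(z)) η(z) for all z. -/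
open Matrix

/-- The Jacobian matrix of `f` at `z`. -/
noncomputable def jacobian {n : ℕ} (f : (Fin n → ℝ) → (Fin n → ℝ)) (z : Fin n → ℝ) :
    Matrix (Fin n) (Fin n) ℝ :=
  Matrix.of fun i j => fderiv ℝ f z (Pi.single j 1) i

lemma jacobian_eq {n : ℕ} (f : (Fin n → ℝ) → (Fin n → ℝ)) (z : Fin n → ℝ) :
    jacobian f z = LinearMap.toMatrix' (fderiv ℝ f z : (Fin n → ℝ) →ₗ[ℝ] (Fin n → ℝ)) := by
  ext i j
  have h : (fun k => if k = j then (1:ℝ) else 0) = Pi.single j 1 := by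
    ext k; simp [Pi.single_apply]
  simp [jacobian, LinearMap.toMatrix'_apply, h]

lemma jacobian_mulVec {n : ℕ} (f : (Fin n → ℝ) → (Fin n → ℝ)) (z v : Fin n → ℝ) :
    (jacobian f z).mulVec v = fderiv ℝ f z v := by
  rw [jacobian_eq, ← Matrix.toLin'_apply, Matrix.toLin'_toMatrix']
  rfl

lemma exists_hasFDerivAt_invFun {n : ℕ} {η : (Fin n → ℝ) → (Fin n → ℝ)}
    (hη : ContDiff ℝ 1 η) (hbij : Function.Bijective η)
    (hDη : ∀ z, IsUnit (jacobian η z)) (w : Fin n → ℝ) :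
    ∃ e' : (Fin n → ℝ) →L[ℝ] (Fin n → ℝ),
      HasFDerivAt (Function.invFun η) e' (η w) ∧
      ∀ v, e' v = (jacobian η w)⁻¹.mulVec v := by
  -- the derivative as a linear map is bijective
  have hunit : IsUnit ((fderiv ℝ η w : (Fin n → ℝ) →ₗ[ℝ] (Fin n → ℝ))) := by
    have h := (hDη w).map (Matrix.toLinAlgEquiv' (R := ℝ) (n := Fin n))
    have key : Matrix.toLinAlgEquiv' (jacobian η w)
        = (fderiv ℝ η w : (Fin n → ℝ) →ₗ[ℝ] (Fin n → ℝ)) := by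
      refine LinearMap.ext fun v => ?_
      rw [Matrix.toLinAlgEquiv'_apply, jacobian_mulVec]
      rfl
    rwa [key] at h
  have hbijD : Function.Bijective (fderiv ℝ η w) :=
    Module.End.isUnit_iff _ |>.mp hunit
  let L : (Fin n → ℝ) ≃ₗ[ℝ] (Fin n → ℝ) :=
    LinearEquiv.ofBijective (fderiv ℝ η w : (Fin n → ℝ) →ₗ[ℝ] (Fin n → ℝ)) hbijD
  let E : (Fin n → ℝ) ≃L[ℝ] (Fin n → ℝ) := L.toContinuousLinearEquiv
  have hE : (E : (Fin n → ℝ) →L[ℝ] (Fin n → ℝ)) = fderiv ℝ η w := by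
    ext v; rfl
  have hs : HasStrictFDerivAt η (E : (Fin n → ℝ) →L[ℝ] (Fin n → ℝ)) w := by
    rw [hE]; exact (hη.contDiffAt).hasStrictFDerivAt one_ne_zero
  have hloc := hs.to_localInverse
  have heq : Function.invFun η =ᶠ[nhds (η w)] hs.localInverse η E w := by
    filter_upwards [hs.eventually_right_inverse] with y hy
    have : η (Function.invFun η y) = y := Function.rightInverse_invFun hbij.2 y
    exact hbij.1 (this.trans hy.symm)
  refine ⟨(E.symm : (Fin n → ℝ) →L[ℝ] (Fin n → ℝ)), ?_, ?_⟩
  · exact (heq.symm.hasFDerivAt_iff).mp hloc.hasFDerivAt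
  · -- matrix identity
    have hinv : (jacobian η w)⁻¹
        = LinearMap.toMatrix' ((E.symm : (Fin n → ℝ) →L[ℝ] (Fin n → ℝ)) :
            (Fin n → ℝ) →ₗ[ℝ] (Fin n → ℝ)) := by
      refine Matrix.inv_eq_left_inv ?_
      have hcomp : (((E.symm : (Fin n → ℝ) →L[ℝ] (Fin n → ℝ))) :
            (Fin n → ℝ) →ₗ[ℝ] (Fin n → ℝ)) ∘ₗ
            ((fderiv ℝ η w : (Fin n → ℝ) →L[ℝ] (Fin n → ℝ)) :
            (Fin n → ℝ) →ₗ[ℝ] (Fin n → ℝ)) = LinearMap.id := by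
        refine LinearMap.ext fun v => ?_
        simp only [LinearMap.comp_apply, LinearMap.coe_coe, LinearMap.id_apply]
        exact E.symm_apply_apply v
      rw [jacobian_eq, ← LinearMap.toMatrix'_comp, hcomp, LinearMap.toMatrix'_id]
    intro v
    rw [hinv, ← Matrix.toLin'_apply, Matrix.toLin'_toMatrix']
    rfl

noncomputable def dotCLM {n : ℕ} (a : Fin n → ℝ) : (Fin n → ℝ) →L[ℝ] ℝ :=
  LinearMap.toContinuousLinearMap
    { toFun := fun v => a ⬝ᵥ v
      map_add' := fun x y => dotProduct_add a x y
      map_smul' := fun c x => by simp [dotProduct_smul] }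

lemma dotCLM_apply {n : ℕ} (a v : Fin n → ℝ) : dotCLM a v = a ⬝ᵥ v := rfl

lemma key_dissip {n : ℕ} {f η : (Fin n → ℝ) → (Fin n → ℝ)}
    (hf : ContDiff ℝ 1 f) (hη : ContDiff ℝ 1 η)
    (hbij : Function.Bijective η)
    (hDη : ∀ z, IsUnit (jacobian η z))
    (h0 : ∀ z, η z = 0 → f z = 0)
    (hnsd : ∀ z v, v ⬝ᵥ (jacobian f z * (jacobian η z)⁻¹).mulVec v ≤ 0)
    (z : Fin n → ℝ) : η z ⬝ᵥ f z ≤ 0 := by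
  set a := η z with ha
  set e := Function.invFun η with he
  have hre : ∀ y, η (e y) = y := Function.rightInverse_invFun hbij.2
  have hle : ∀ x, e (η x) = x := Function.leftInverse_invFun hbij.1
  set φ : ℝ → ℝ := fun t => a ⬝ᵥ f (e (t • a)) with hφ
  have hderiv : ∀ t : ℝ, HasDerivAt φ
      (a ⬝ᵥ (jacobian f (e (t • a)) * (jacobian η (e (t • a)))⁻¹).mulVec a) t := by
    intro t
    set w := e (t • a) with hw
    have hηw : η w = t • a := hre _
    obtain ⟨e', he', hev⟩ := exists_hasFDerivAt_invFun hη hbij hDη w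
    rw [hηw] at he'
    have h2 : HasDerivAt (fun t : ℝ => t • a) a t := by
      simpa using (hasDerivAt_id t).smul_const a
    have h3 : HasDerivAt (fun t : ℝ => e (t • a)) (e' a) t :=
      by have := he'.comp_hasDerivAt t h2; exact this
    have h4 : HasFDerivAt f (fderiv ℝ f w) w :=
      ((hf.differentiable one_ne_zero) w).hasFDerivAt
    have h5 : HasDerivAt (fun t : ℝ => f (e (t • a))) (fderiv ℝ f w (e' a)) t := by
      have := h4.comp_hasDerivAt t h3
      exact this
    have h6 : HasDerivAt φ (dotCLM a (fderiv ℝ f w (e' a))) t :=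
      (dotCLM a).hasFDerivAt.comp_hasDerivAt t h5
    have hval : dotCLM a (fderiv ℝ f w (e' a))
        = a ⬝ᵥ (jacobian f w * (jacobian η w)⁻¹).mulVec a := by
      rw [dotCLM_apply, ← Matrix.mulVec_mulVec, jacobian_mulVec, hev]
    rwa [hval] at h6
  have hanti : Antitone φ := by
    refine antitone_of_deriv_nonpos (fun t => (hderiv t).differentiableAt) fun t => ?_
    rw [(hderiv t).deriv]
    exact hnsd _ a
  have h10 : φ 1 ≤ φ 0 := hanti zero_le_one
  have hφ0 : φ 0 = 0 := by
    have h00 : f (e 0) = 0 := h0 _ (hre 0)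
    simp [hφ, h00]
  have hφ1 : φ 1 = a ⬝ᵥ f z := by
    have h11 : e a = z := by rw [ha, hle]
    simp [hφ, one_smul, h11]
  rw [hφ1, hφ0] at h10
  exact h10

lemma vecMulVec_mulVec {n : ℕ} (x y v : Fin n → ℝ) :
    (vecMulVec x y).mulVec v = (y ⬝ᵥ v) • x := by
  ext i
  simp only [vecMulVec, Matrix.mulVec, dotProduct, Pi.smul_apply, smul_eq_mul, of_apply]
  simp_rw [mul_assoc]
  rw [← Finset.mul_sum, mul_comm]

lemma pointwise {n : ℕ} (a b : Fin n → ℝ) (h0 : a = 0 → b = 0) (hab : a ⬝ᵥ b ≤ 0) :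
    ∃ M : Matrix (Fin n) (Fin n) ℝ, (∀ v, v ⬝ᵥ M.mulVec v ≤ 0) ∧ M.mulVec a = b := by
  by_cases ha : a = 0
  · exact ⟨0, by simp, by simp [ha, h0 ha]⟩
  · have hq : 0 < a ⬝ᵥ a := by
      rcases lt_or_eq_of_le (Finset.sum_nonneg fun i _ => mul_self_nonneg (a i) :
        (0:ℝ) ≤ a ⬝ᵥ a) with h | h
      · exact h
      · exact absurd (dotProduct_self_eq_zero.mp h.symm) ha
    set q := a ⬝ᵥ a with hqdef
    refine ⟨q⁻¹ • (vecMulVec b a - vecMulVec a b) + ((a ⬝ᵥ b) / q ^ 2) • vecMulVec a a, ?_, ?_⟩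
    · intro v
      have hcalc : v ⬝ᵥ (q⁻¹ • (vecMulVec b a - vecMulVec a b)
          + ((a ⬝ᵥ b) / q ^ 2) • vecMulVec a a).mulVec v
          = q⁻¹ * ((a ⬝ᵥ v) * (v ⬝ᵥ b) - (b ⬝ᵥ v) * (v ⬝ᵥ a))
            + (a ⬝ᵥ b) / q ^ 2 * ((a ⬝ᵥ v) * (v ⬝ᵥ a)) := by
        rw [Matrix.add_mulVec, Matrix.smul_mulVec, Matrix.smul_mulVec,
          Matrix.sub_mulVec, vecMulVec_mulVec, vecMulVec_mulVec, vecMulVec_mulVec,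
          dotProduct_add, dotProduct_smul, dotProduct_smul, dotProduct_sub,
          dotProduct_smul, dotProduct_smul, dotProduct_smul]
        simp [smul_eq_mul]
      rw [hcalc, dotProduct_comm v b, dotProduct_comm v a]
      have h1 : (a ⬝ᵥ b) / q ^ 2 ≤ 0 := div_nonpos_iff.mpr (Or.inr ⟨hab, by positivity⟩)
      have : (a ⬝ᵥ v) * (b ⬝ᵥ v) - (b ⬝ᵥ v) * (a ⬝ᵥ v) = 0 := by ring
      nlinarith [mul_self_nonneg (a ⬝ᵥ v)]
    · rw [Matrix.add_mulVec, Matrix.smul_mulVec, Matrix.sub_mulVec,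
        Matrix.smul_mulVec, vecMulVec_mulVec, vecMulVec_mulVec, vecMulVec_mulVec]
      rw [dotProduct_comm b a, ← hqdef]
      ext i
      simp only [Pi.add_apply, Pi.smul_apply, Pi.sub_apply, smul_eq_mul]
      field_simp
      ring

theorem stmt_9 {n : ℕ} (f η : (Fin n → ℝ) → (Fin n → ℝ))
    (hf : ContDiff ℝ 1 f) (hη : ContDiff ℝ 1 η)
    (hbij : Function.Bijective η)
    (hDη : ∀ z, IsUnit (jacobian η z))
    (h0 : ∀ z, η z = 0 → f z = 0)
    (hnsd : ∀ z v, v ⬝ᵥ (jacobian f z * (jacobian η z)⁻¹).mulVec v ≤ 0) :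
    ∃ J R : (Fin n → ℝ) → Matrix (Fin n) (Fin n) ℝ,
      (∀ z, (J z)ᵀ = -(J z)) ∧
      (∀ z, (R z)ᵀ = R z) ∧
      (∀ z v, 0 ≤ v ⬝ᵥ (R z).mulVec v) ∧
      (∀ z, f z = (J z - R z).mulVec (η z)) := by
  have key : ∀ z, ∃ M : Matrix (Fin n) (Fin n) ℝ,
      (∀ v, v ⬝ᵥ M.mulVec v ≤ 0) ∧ M.mulVec (η z) = f z :=
    fun z => pointwise (η z) (f z) (fun h => h0 z h) (key_dissip hf hη hbij hDη h0 hnsd z)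
  choose M hM1 hM2 using key
  have hsym : ∀ z v, v ⬝ᵥ (M z)ᵀ.mulVec v = v ⬝ᵥ (M z).mulVec v := by
    intro z v
    rw [Matrix.mulVec_transpose, dotProduct_comm, ← Matrix.dotProduct_mulVec]
  refine ⟨fun z => (2⁻¹ : ℝ) • (M z - (M z)ᵀ), fun z => (-(2⁻¹ : ℝ)) • (M z + (M z)ᵀ),
    ?_, ?_, ?_, ?_⟩
  · intro z
    ext i j
    simp [Matrix.transpose_apply, Matrix.sub_apply, Matrix.smul_apply]
    ring
  · intro z
    ext i j
    simp [Matrix.transpose_apply, Matrix.add_apply, Matrix.smul_apply]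
    ring
  · intro z v
    have h1 := hM1 z v
    have h2 := hsym z v
    have hcalc : v ⬝ᵥ ((-(2⁻¹ : ℝ)) • (M z + (M z)ᵀ)).mulVec v
        = (-(2⁻¹ : ℝ)) * (v ⬝ᵥ (M z).mulVec v + v ⬝ᵥ (M z)ᵀ.mulVec v) := by
      rw [Matrix.smul_mulVec, dotProduct_smul, Matrix.add_mulVec, dotProduct_add]
      rfl
    rw [hcalc, h2]
    linarith
  · intro z
    have hJR : (2⁻¹ : ℝ) • (M z - (M z)ᵀ) - (-(2⁻¹ : ℝ)) • (M z + (M z)ᵀ) = M z := by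
      ext i j
      simp [Matrix.sub_apply, Matrix.add_apply, Matrix.smul_apply, Matrix.transpose_apply]
      ring
    rw [hJR, hM2]
end
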